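/- For all closed session types T and U: U ⊨ F(T, ⊕) if and only if T ⊨ F(U, &). -/
import Mathlib


namespace SessionCF

/-- Polarity of an action: `send` is `!`, `recv` is `?`.  Also used for the
choice constructors: `send` is the internal choice `⊕`, `recv` the external
choice `&`. -/
inductive Pol : Type
  | send
  | recv
  deriving DecidableEq, Repr

/-- The dual polarity / constructor. -/
def Pol.dual : Pol → Pol
  | .send => .recv
  | .recv => .send

/-- Actions `!a` and `?a` over the alphabet `A`. -/
abbrev Act (A : Type) := Pol × A

/-- Session types (de Bruijn representation of recursion variables).
An internal choice `⊕_{i∈I} !a_i.T_i` is `choice .send I br`; an external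
choice `&_{i∈I} ?a_i.T_i` is `choice .recv I br`, where `br a` is the
continuation after message `a` (only relevant for `a ∈ I`). -/
inductive SType (A : Type) : Type
  | end_ : SType A
  | choice : Pol → Finset A → (A → SType A) → SType A
  | mu : SType A → SType A
  | var : ℕ → SType A

namespace SType

variable {A : Type}

/-- Lifting of a renaming under a binder. -/
def liftR (f : ℕ → ℕ) : ℕ → ℕ
  | 0 => 0
  | n + 1 => f n + 1

/-- Renaming of free type variables. -/
def rename : SType A → (ℕ → ℕ) → SType A
  | .end_, _ => .end_
  | .choice p d br, f => .choice p d (fun a => (br a).rename f)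
  | .mu T, f => .mu (T.rename (liftR f))
  | .var n, f => .var (f n)

/-- Lifting of a (parallel, capture-avoiding) substitution under a binder. -/
def liftS (σ : ℕ → SType A) : ℕ → SType A
  | 0 => .var 0
  | n + 1 => (σ n).rename Nat.succ

/-- Parallel capture-avoiding substitution. -/
def subst : SType A → (ℕ → SType A) → SType A
  | .end_, _ => .end_
  | .choice p d br, σ => .choice p d (fun a => (br a).subst σ)
  | .mu T, σ => .mu (T.subst (liftS σ))
  | .var n, σ => σ n

/-- Capture-avoiding substitution `T[U/x]` of `U` for the free variable `x`. -/
def substVar (T : SType A) (x : ℕ) (U : SType A) : SType A :=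
  T.subst (fun n => if n = x then U else .var n)

/-- `cons` of a type onto a substitution. -/
def consS (U : SType A) (σ : ℕ → SType A) : ℕ → SType A
  | 0 => U
  | n + 1 => σ n

/-- The unfolding `T[rec x.T / x]` of the body of `rec x.T`. -/
def unfold (T : SType A) : SType A :=
  T.subst (consS (.mu T) .var)

/-- All free variables are `< k`. -/
def closedUnder : SType A → ℕ → Prop
  | .end_, _ => True
  | .choice _ d br, k => ∀ a ∈ d, (br a).closedUnder k
  | .mu T, k => T.closedUnder (k + 1)
  | .var n, k => n < k

/-- A closed session type (no free variables). -/
def closed (T : SType A) : Prop := T.closedUnder 0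

/-- Variable `x` only occurs guarded (under a choice prefix). -/
def guardedVar : SType A → ℕ → Prop
  | .end_, _ => True
  | .choice _ _ _, _ => True
  | .mu T, x => T.guardedVar (x + 1)
  | .var m, x => m ≠ x

/-- Well-formed session types: contractive (every recursion variable is
guarded) and every choice has a nonempty, finite index set. -/
def wf : SType A → Prop
  | .end_ => True
  | .choice _ d br => d.Nonempty ∧ ∀ a ∈ d, (br a).wf
  | .mu T => T.wf ∧ T.guardedVar 0
  | .var _ => True

/-- The dual session type: swaps `⊕` with `&` and `!` with `?`. -/
def dual : SType A → SType A
  | .end_ => .end_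
  | .choice p d br => .choice p.dual d (fun a => (br a).dual)
  | .mu T => .mu T.dual
  | .var n => .var n

end SType

/-- The labelled transition system on session types. -/
inductive Step {A : Type} : SType A → Act A → SType A → Prop
  | choice {p : Pol} {d : Finset A} {br : A → SType A} {a : A} (h : a ∈ d) :
      Step (.choice p d br) (p, a) (br a)
  | unf {T : SType A} {α : Act A} {T' : SType A} :
      Step T.unfold α T' → Step (.mu T) α T'

/-- Modal μ-calculus formulae (greatest-fixpoint fragment), de Bruijn. -/
inductive Formula (A : Type) : Type
  | tt : Formula A
  | ff : Formula A
  | and : Formula A → Formula A → Formula A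
  | or : Formula A → Formula A → Formula A
  | box : Act A → Formula A → Formula A
  | dia : Act A → Formula A → Formula A
  | nu : Formula A → Formula A
  | var : ℕ → Formula A

namespace Formula

variable {A : Type}

/-- Renaming of free formula variables. -/
def rename : Formula A → (ℕ → ℕ) → Formula A
  | .tt, _ => .tt
  | .ff, _ => .ff
  | .and φ ψ, f => .and (φ.rename f) (ψ.rename f)
  | .or φ ψ, f => .or (φ.rename f) (ψ.rename f)
  | .box α φ, f => .box α (φ.rename f)
  | .dia α φ, f => .dia α (φ.rename f)
  | .nu φ, f => .nu (φ.rename (SType.liftR f))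
  | .var n, f => .var (f n)

/-- Lifting of a substitution under a `ν` binder. -/
def liftF (τ : ℕ → Formula A) : ℕ → Formula A
  | 0 => .var 0
  | n + 1 => (τ n).rename Nat.succ

/-- Parallel capture-avoiding substitution on formulae. -/
def subst : Formula A → (ℕ → Formula A) → Formula A
  | .tt, _ => .tt
  | .ff, _ => .ff
  | .and φ ψ, τ => .and (φ.subst τ) (ψ.subst τ)
  | .or φ ψ, τ => .or (φ.subst τ) (ψ.subst τ)
  | .box α φ, τ => .box α (φ.subst τ)
  | .dia α φ, τ => .dia α (φ.subst τ)
  | .nu φ, τ => .nu (φ.subst (liftF τ))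
  | .var n, τ => τ n

/-- Capture-avoiding substitution `φ[ψ/x]` for the free variable `x`. -/
def substVar (φ : Formula A) (x : ℕ) (ψ : Formula A) : Formula A :=
  φ.subst (fun n => if n = x then ψ else .var n)

/-- `cons` of a formula onto a substitution. -/
def consF (ψ : Formula A) (τ : ℕ → Formula A) : ℕ → Formula A
  | 0 => ψ
  | n + 1 => τ n

/-- Instantiation `φ[ψ/x]` of the variable bound by the enclosing binder
(de Bruijn index `0`). -/
def inst (φ ψ : Formula A) : Formula A :=
  φ.subst (consF ψ .var)

/-- The `n`-th approximation `(νx.φ)ⁿ` of the fixpoint `νx.φ`, where `φ` is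
the body:  `(νx.φ)⁰ = true` and `(νx.φ)ⁿ⁺¹ = φ[(νx.φ)ⁿ/x]`. -/
def nuApprox (φ : Formula A) : ℕ → Formula A
  | 0 => .tt
  | n + 1 => φ.inst (φ.nuApprox n)

/-- All free formula variables are `< k`. -/
def closedUnder : Formula A → ℕ → Prop
  | .tt, _ => True
  | .ff, _ => True
  | .and φ ψ, k => φ.closedUnder k ∧ ψ.closedUnder k
  | .or φ ψ, k => φ.closedUnder k ∧ ψ.closedUnder k
  | .box _ φ, k => φ.closedUnder k
  | .dia _ φ, k => φ.closedUnder k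
  | .nu φ, k => φ.closedUnder (k + 1)
  | .var n, k => n < k

/-- A closed formula. -/
def closed (φ : Formula A) : Prop := φ.closedUnder 0

/-- Variable `x` only occurs guarded (under a modality). -/
def guardedVar : Formula A → ℕ → Prop
  | .tt, _ => True
  | .ff, _ => True
  | .and φ ψ, x => φ.guardedVar x ∧ ψ.guardedVar x
  | .or φ ψ, x => φ.guardedVar x ∧ ψ.guardedVar x
  | .box _ _, _ => True
  | .dia _ _, _ => True
  | .nu φ, x => φ.guardedVar (x + 1)
  | .var m, x => m ≠ x

/-- Contractive (well-formed) formulae. -/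
def wf : Formula A → Prop
  | .tt => True
  | .ff => True
  | .and φ ψ => φ.wf ∧ ψ.wf
  | .or φ ψ => φ.wf ∧ ψ.wf
  | .box _ φ => φ.wf
  | .dia _ φ => φ.wf
  | .nu φ => φ.wf ∧ φ.guardedVar 0
  | .var _ => True

/-- The dual formula: swaps `!` and `?` in all modalities. -/
def dual : Formula A → Formula A
  | .tt => .tt
  | .ff => .ff
  | .and φ ψ => .and φ.dual ψ.dual
  | .or φ ψ => .or φ.dual ψ.dual
  | .box (p, a) φ => .box (p.dual, a) φ.dual
  | .dia (p, a) φ => .dia (p.dual, a) φ.dual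
  | .nu φ => .nu φ.dual
  | .var n => .var n

end Formula

/-- The satisfaction relation `T ⊨ φ` between session types and formulae,
defined inductively; `T ⊨ νx.φ` iff `T ⊨ (νx.φ)ⁿ` for all `n`. -/
inductive Sat {A : Type} : SType A → Formula A → Prop
  | tt {T : SType A} : Sat T .tt
  | and {T : SType A} {φ ψ : Formula A} : Sat T φ → Sat T ψ → Sat T (.and φ ψ)
  | orl {T : SType A} {φ ψ : Formula A} : Sat T φ → Sat T (.or φ ψ)
  | orr {T : SType A} {φ ψ : Formula A} : Sat T ψ → Sat T (.or φ ψ)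
  | box {T : SType A} {α : Act A} {φ : Formula A} :
      (∀ T', Step T α T' → Sat T' φ) → Sat T (.box α φ)
  | dia {T T' : SType A} {α : Act A} {φ : Formula A} :
      Step T α T' → Sat T' φ → Sat T (.dia α φ)
  | nu {T : SType A} {φ : Formula A} :
      (∀ n, Sat T (φ.nuApprox n)) → Sat T (.nu φ)

/-- One step of the subtyping rules (for parameter `s ∈ {⊕, &}`), including
the equi-recursive identifications of `rec x.T` with its unfolding. -/
def SubStep {A : Type} (s : Pol) (R : SType A → SType A → Prop)
    (T U : SType A) : Prop :=
  (T = .end_ ∧ U = .end_)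
  ∨ (∃ (dT : Finset A) (brT : A → SType A) (dU : Finset A) (brU : A → SType A),
      T = .choice s dT brT ∧ U = .choice s dU brU ∧ dT ⊆ dU ∧
        ∀ a ∈ dT, R (brT a) (brU a))
  ∨ (∃ (dT : Finset A) (brT : A → SType A) (dU : Finset A) (brU : A → SType A),
      T = .choice s.dual dT brT ∧ U = .choice s.dual dU brU ∧ dU ⊆ dT ∧
        ∀ a ∈ dU, R (brT a) (brU a))
  ∨ (∃ T₀, T = .mu T₀ ∧ R T₀.unfold U)
  ∨ (∃ U₀, U = .mu U₀ ∧ R T U₀.unfold)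

/-- The subtyping relation `≤_s`: the largest relation closed under the
(coinductively interpreted, equi-recursive) subtyping rules. -/
def Subtype {A : Type} (s : Pol) (T U : SType A) : Prop :=
  ∃ R : SType A → SType A → Prop,
    (∀ T U, R T U → SubStep s R T U) ∧ R T U

section CharFormula

variable {A : Type} [Fintype A] [LinearOrder A]

/-- Big conjunction of a list of formulae. -/
def bigAnd : List (Formula A) → Formula A
  | [] => .tt
  | φ :: rest => .and φ (bigAnd rest)

/-- Big disjunction of a list of formulae. -/
def bigOr : List (Formula A) → Formula A
  | [] => .ff
  | φ :: rest => .or φ (bigOr rest)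

/-- The (canonically ordered) list of all actions `𝒜 = {!a, ?a : a ∈ 𝔸}`. -/
def allActs (A : Type) [Fintype A] [LinearOrder A] : List (Act A) :=
  ((Finset.univ : Finset A).sort (· ≤ ·)).map (fun a => (Pol.send, a)) ++
    ((Finset.univ : Finset A).sort (· ≤ ·)).map (fun a => (Pol.recv, a))

/-- The characteristic formula `F(T, s)` of a session type `T` on the
constructor `s ∈ {⊕, &}`. -/
def charF : SType A → Pol → Formula A
  | .end_, _ => bigAnd ((allActs A).map (fun α => .box α .ff))
  | .var n, _ => .var n
  | .mu T, s => .nu (charF T s)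
  | .choice p d br, s =>
      if p = s then
        bigAnd ((d.sort (· ≤ ·)).map (fun a => .dia (p, a) (charF (br a) s)))
      else
        .and
          (bigAnd ((d.sort (· ≤ ·)).map (fun a => .box (p, a) (charF (br a) s))))
          (.and
            (bigOr ((d.sort (· ≤ ·)).map (fun a => Formula.dia (p, a) .tt)))
            (bigAnd (((allActs A).filter
                (fun α => ¬ (α.1 = p ∧ α.2 ∈ d))).map (fun α => .box α .ff))))

end CharFormula

/-- Synchronous semantics of a system of two session types. -/
inductive SysStep {A : Type} : SType A × SType A → SType A × SType A → Prop
  | comm {T T' U U' : SType A} {p : Pol} {a : A} :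
      Step T (p, a) T' → Step U (p.dual, a) U' → SysStep (T, U) (T', U')

/-- `T` is a choice with constructor `p`. -/
def isChoice {A : Type} (p : Pol) (T : SType A) : Prop :=
  ∃ (d : Finset A) (br : A → SType A), T = SType.choice p d br

/-- Error systems. -/
def Error {A : Type} (T U : SType A) : Prop :=
  (∃ p, isChoice p T ∧ isChoice p U)
  ∨ (∃ (dT : Finset A) (brT : A → SType A) (dU : Finset A) (brU : A → SType A),
      T = .choice .send dT brT ∧ U = .choice .recv dU brU ∧ ∃ a ∈ dT, a ∉ dU)
  ∨ (∃ (dT : Finset A) (brT : A → SType A) (dU : Finset A) (brU : A → SType A),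
      U = .choice .send dU brU ∧ T = .choice .recv dT brT ∧ ∃ a ∈ dU, a ∉ dT)
  ∨ (T = .end_ ∧ ∃ p, isChoice p U)
  ∨ (U = .end_ ∧ ∃ p, isChoice p T)

/-- A system is safe if no reachable system is an error. -/
def Safe {A : Type} (T U : SType A) : Prop :=
  ∀ S' : SType A × SType A,
    Relation.ReflTransGen SysStep (T, U) S' → ¬ Error S'.1 S'.2

/-- A substitution is closed when all its components are closed types. -/
def closedSubst {A : Type} (σ : ℕ → SType A) : Prop :=
  ∀ n, (σ n).closed

/-- Extended subtyping: all closed instantiations of the free variables are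
related by `≤_s`. -/
def ExtSub {A : Type} (s : Pol) (T U : SType A) : Prop :=
  ∀ σ : ℕ → SType A, closedSubst σ → Subtype s (T.subst σ) (U.subst σ)

/-- The `k`-limited subtyping derivations on closed types (equi-recursive:
recursion may be unfolded freely at the same level; premises are at level
`k - 1`; everything holds at level `0`). -/
inductive SubK {A : Type} (s : Pol) : ℕ → SType A → SType A → Prop
  | zero {T U : SType A} : SubK s 0 T U
  | end_ {k : ℕ} : SubK s (k + 1) .end_ .end_
  | ch {k : ℕ} {dT : Finset A} {brT : A → SType A} {dU : Finset A}
      {brU : A → SType A} :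
      dT ⊆ dU → (∀ a ∈ dT, SubK s k (brT a) (brU a)) →
      SubK s (k + 1) (.choice s dT brT) (.choice s dU brU)
  | coch {k : ℕ} {dT : Finset A} {brT : A → SType A} {dU : Finset A}
      {brU : A → SType A} :
      dU ⊆ dT → (∀ a ∈ dU, SubK s k (brT a) (brU a)) →
      SubK s (k + 1) (.choice s.dual dT brT) (.choice s.dual dU brU)
  | recL {k : ℕ} {T U : SType A} :
      SubK s (k + 1) T.unfold U → SubK s (k + 1) (.mu T) U
  | recR {k : ℕ} {T U : SType A} :
      SubK s (k + 1) T U.unfold → SubK s (k + 1) T (.mu U)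

/-- The extended `k`-limited subtyping `≤_{s,e,k}`. -/
def ExtSubK {A : Type} (s : Pol) (k : ℕ) (T U : SType A) : Prop :=
  ∀ σ : ℕ → SType A, closedSubst σ → SubK s k (T.subst σ) (U.subst σ)

/-- Extended satisfaction `T ⊨_e φ`: every closed instantiation of the type
by types `V_i` and of the formula by closed formulae `ψ_i` with `V_i ⊨ ψ_i`
(at the same variable) satisfies the instantiated formula. -/
def SatE {A : Type} (T : SType A) (φ : Formula A) : Prop :=
  ∀ (σ : ℕ → SType A) (τ : ℕ → Formula A),
    closedSubst σ → (∀ n, (τ n).closed) → (∀ n, Sat (σ n) (τ n)) →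
    Sat (T.subst σ) (φ.subst τ)

/-- The `k`-limited extended satisfaction relation `⊨_{e,k}`. -/
inductive SatK {A : Type} : ℕ → SType A → Formula A → Prop
  | zero {T : SType A} {φ : Formula A} : SatK 0 T φ
  | tt {k : ℕ} {T : SType A} : SatK (k + 1) T .tt
  | and {k : ℕ} {T : SType A} {φ ψ : Formula A} :
      SatK (k + 1) T φ → SatK (k + 1) T ψ → SatK (k + 1) T (.and φ ψ)
  | orl {k : ℕ} {T : SType A} {φ ψ : Formula A} :
      SatK (k + 1) T φ → SatK (k + 1) T (.or φ ψ)
  | orr {k : ℕ} {T : SType A} {φ ψ : Formula A} :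
      SatK (k + 1) T ψ → SatK (k + 1) T (.or φ ψ)
  | box {k : ℕ} {T : SType A} {α : Act A} {φ : Formula A} :
      (∀ σ : ℕ → SType A, closedSubst σ →
        ∀ T', Step (T.subst σ) α T' → SatK k T' φ) →
      SatK (k + 1) T (.box α φ)
  | dia {k : ℕ} {T : SType A} {α : Act A} {φ : Formula A}
      (W : ∀ σ : ℕ → SType A, closedSubst σ → SType A) :
      (∀ (σ : ℕ → SType A) (h : closedSubst σ), Step (T.subst σ) α (W σ h)) →
      (∀ (σ : ℕ → SType A) (h : closedSubst σ), SatK k (W σ h) φ) →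
      SatK (k + 1) T (.dia α φ)
  | nu {k : ℕ} {T : SType A} {φ : Formula A} :
      (∀ n, SatK (k + 1) T (φ.nuApprox n)) → SatK (k + 1) T (.nu φ)

/-- Type constructors `ℭ`: `end`, `⊕A` and `&A`. -/
inductive Ctor (A : Type) : Type
  | end_ : Ctor A
  | choice : Pol → Finset A → Ctor A

/-- The labelling of the term automaton `𝒜(T)`: the constructor of (the
unfolding of) a session type. -/
inductive HasCtor {A : Type} : SType A → Ctor A → Prop
  | end_ : HasCtor .end_ .end_
  | choice {p : Pol} {d : Finset A} {br : A → SType A} :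
      HasCtor (.choice p d br) (.choice p d)
  | unf {T : SType A} {c : Ctor A} : HasCtor T.unfold c → HasCtor (.mu T) c

/-- The order `⊑` on type constructors. -/
def CtorLe {A : Type} : Ctor A → Ctor A → Prop
  | .end_, .end_ => True
  | .choice .send d₁, .choice .send d₂ => d₁ ⊆ d₂
  | .choice .recv d₁, .choice .recv d₂ => d₂ ⊆ d₁
  | _, _ => False

/-- Transitions of the product automaton `𝒜(T) × 𝒜(U)`: a common action. -/
def ProdStep {A : Type} (S S' : SType A × SType A) : Prop :=
  ∃ α : Act A, Step S.1 α S'.1 ∧ Step S.2 α S'.2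

end SessionCF

namespace SessionCF

theorem Pol.dual_dual (p : Pol) : p.dual.dual = p := by cases p <;> rfl
theorem Pol.dual_ne (p : Pol) : p.dual ≠ p := by cases p <;> simp [Pol.dual]
theorem Pol.eq_dual_of_ne {p s : Pol} (h : p ≠ s) : p = s.dual := by
  cases p <;> cases s <;> simp_all [Pol.dual]

namespace SType
variable {A : Type}

theorem liftR_comp (f g : ℕ → ℕ) : liftR (g ∘ f) = liftR g ∘ liftR f := by
  funext n; cases n <;> rfl

theorem rename_rename (T : SType A) (f g : ℕ → ℕ) :
    (T.rename f).rename g = T.rename (g ∘ f) := by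
  induction T generalizing f g with
  | end_ => rfl
  | choice p d br ih => simp [rename, ih]
  | mu T ih => simp [rename, ih, liftR_comp]
  | var n => rfl

theorem liftS_comp_liftR (σ : ℕ → SType A) (f : ℕ → ℕ) :
    (fun n => liftS σ (liftR f n)) = liftS (fun n => σ (f n)) := by
  funext n; cases n <;> rfl

theorem rename_subst (T : SType A) (f : ℕ → ℕ) (σ : ℕ → SType A) :
    (T.rename f).subst σ = T.subst (fun n => σ (f n)) := by
  induction T generalizing f σ with
  | end_ => rfl
  | choice p d br ih => simp [rename, subst, ih]
  | mu T ih => simp [rename, subst, ih, liftS_comp_liftR]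
  | var n => rfl

theorem liftS_rename (σ : ℕ → SType A) (f : ℕ → ℕ) :
    (fun n => (liftS σ n).rename (liftR f)) = liftS (fun n => (σ n).rename f) := by
  funext n; cases n with
  | zero => rfl
  | succ n =>
      simp only [liftS, rename_rename]
      rfl

theorem subst_rename (T : SType A) (σ : ℕ → SType A) (f : ℕ → ℕ) :
    (T.subst σ).rename f = T.subst (fun n => (σ n).rename f) := by
  induction T generalizing σ f with
  | end_ => rfl
  | choice p d br ih => simp [rename, subst, ih]
  | mu T ih => simp [rename, subst, ih, liftS_rename]
  | var n => rfl

theorem liftS_subst (σ σ' : ℕ → SType A) :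
    (fun n => (liftS σ n).subst (liftS σ')) = liftS (fun n => (σ n).subst σ') := by
  funext n; cases n with
  | zero => rfl
  | succ n =>
      simp only [liftS, rename_subst, subst_rename]

theorem subst_subst (T : SType A) (σ σ' : ℕ → SType A) :
    (T.subst σ).subst σ' = T.subst (fun n => (σ n).subst σ') := by
  induction T generalizing σ σ' with
  | end_ => rfl
  | choice p d br ih => simp [subst, ih]
  | mu T ih => simp [subst, ih, liftS_subst]
  | var n => rfl

theorem liftS_var : liftS (A := A) .var = .var := by
  funext n; cases n <;> rfl

theorem subst_var_id (T : SType A) : T.subst .var = T := by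
  induction T with
  | end_ => rfl
  | choice p d br ih => simp [subst, ih]
  | mu T ih => simp [subst, liftS_var, ih]
  | var n => rfl

end SType
end SessionCF
namespace SessionCF
namespace SType
variable {A : Type}

theorem closedUnder_rename {T : SType A} {k j : ℕ} {f : ℕ → ℕ}
    (hT : T.closedUnder k) (hf : ∀ n < k, f n < j) : (T.rename f).closedUnder j := by
  induction T generalizing k j f with
  | end_ => trivial
  | choice p d br ih =>
      intro a ha; exact ih a (hT a ha) hf
  | mu T ih =>
      exact ih hT (fun n hn => by
        cases n with
        | zero => exact Nat.succ_pos _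
        | succ n => exact Nat.succ_lt_succ (hf n (Nat.lt_of_succ_lt_succ hn)))
  | var n => exact hf n hT

theorem closedUnder_subst {T : SType A} {k j : ℕ} {σ : ℕ → SType A}
    (hT : T.closedUnder k) (hσ : ∀ n < k, (σ n).closedUnder j) :
    (T.subst σ).closedUnder j := by
  induction T generalizing k j σ with
  | end_ => trivial
  | choice p d br ih => intro a ha; exact ih a (hT a ha) hσ
  | mu T ih =>
      exact ih hT (fun n hn => by
        cases n with
        | zero => exact Nat.succ_pos _
        | succ n =>
            exact closedUnder_rename (hσ n (Nat.lt_of_succ_lt_succ hn))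
              (fun m hm => Nat.succ_lt_succ hm))
  | var n => exact hσ n hT

theorem guardedVar_rename {T : SType A} {x : ℕ} {f : ℕ → ℕ}
    (h : ∀ m, f m = x → T.guardedVar m) : (T.rename f).guardedVar x := by
  induction T generalizing x f with
  | end_ => trivial
  | choice p d br ih => trivial
  | mu T ih =>
      exact ih (fun m hm => by
        cases m with
        | zero => cases hm
        | succ m =>
            exact h m (Nat.succ_injective hm))
  | var n =>
      intro hc; exact (h n hc) rfl

theorem guardedVar_subst {T : SType A} {x : ℕ} {σ : ℕ → SType A}
    (hT : T.guardedVar x) (hσ : ∀ n, n ≠ x → (σ n).guardedVar x) :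
    (T.subst σ).guardedVar x := by
  induction T generalizing x σ with
  | end_ => trivial
  | choice p d br ih => trivial
  | mu T ih =>
      refine ih hT (fun n hn => ?_)
      cases n with
      | zero => exact Nat.succ_ne_zero x ∘ Eq.symm
      | succ n =>
          refine guardedVar_rename (fun m hm => ?_)
          have hmx : m = x := Nat.succ_injective hm
          subst hmx
          exact hσ n (fun h => hn (by rw [h]))
  | var n => exact hσ n hT

theorem wf_rename {T : SType A} {f : ℕ → ℕ} (h : T.wf)
    (hf : ∀ m n, f m = f n → m = n) : (T.rename f).wf := by
  induction T generalizing f with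
  | end_ => trivial
  | choice p d br ih =>
      exact ⟨h.1, fun a ha => ih a (h.2 a ha) hf⟩
  | mu T ih =>
      refine ⟨ih h.1 ?_, ?_⟩
      · intro m n hmn
        cases m <;> cases n <;> simp_all [liftR]
        exact hf _ _ hmn
      · exact guardedVar_rename (fun m hm => by
          cases m with
          | zero => exact h.2
          | succ m => exact absurd hm (Nat.succ_ne_zero _))
  | var n => trivial

theorem wf_subst {T : SType A} {σ : ℕ → SType A} (h : T.wf)
    (hσ : ∀ n, (σ n).wf) : (T.subst σ).wf := by
  induction T generalizing σ with
  | end_ => trivial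
  | choice p d br ih => exact ⟨h.1, fun a ha => ih a (h.2 a ha) hσ⟩
  | mu T ih =>
      refine ⟨ih h.1 (fun n => ?_), ?_⟩
      · cases n with
        | zero => trivial
        | succ n => exact wf_rename (hσ n) (fun _ _ h => Nat.succ_injective h)
      · refine guardedVar_subst h.2 (fun n hn => ?_)
        cases n with
        | zero => exact absurd rfl hn
        | succ n =>
            exact guardedVar_rename (fun m hm => absurd hm (Nat.succ_ne_zero _))
  | var n => exact hσ n

/-- mu-spine length. -/
def muh : SType A → ℕ
  | .mu T => muh T + 1
  | _ => 0

/-- the mu-spine does not end in a variable. -/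
def spineOk : SType A → Prop
  | .mu T => spineOk T
  | .var _ => False
  | _ => True

theorem muh_subst {T : SType A} (h : spineOk T) (σ : ℕ → SType A) :
    muh (T.subst σ) = muh T := by
  induction T generalizing σ with
  | end_ => rfl
  | choice p d br ih => rfl
  | mu T ih => simp [subst, muh, ih h]
  | var n => exact absurd h id

theorem spineOk_subst {T : SType A} (h : spineOk T) (σ : ℕ → SType A) :
    spineOk (T.subst σ) := by
  induction T generalizing σ with
  | end_ => trivial
  | choice p d br ih => trivial
  | mu T ih => exact ih h _
  | var n => exact absurd h id

theorem spineOk_of_wf {T : SType A} (hw : T.wf) {k : ℕ} (hc : T.closedUnder k)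
    (hg : ∀ i < k, T.guardedVar i) : spineOk T := by
  induction T generalizing k with
  | end_ => trivial
  | choice p d br ih => trivial
  | mu T ih =>
      refine ih hw.1 hc (fun i hi => ?_)
      cases i with
      | zero => exact hw.2
      | succ i => exact hg i (Nat.lt_of_succ_lt_succ hi)
  | var n => exact (hg n hc) rfl

theorem unfold_closed {T : SType A} (h : (SType.mu T).closed) : T.unfold.closed := by
  refine closedUnder_subst (j := 0) h (fun n hn => ?_)
  cases n with
  | zero => exact h
  | succ n => exact absurd hn (by omega)

theorem unfold_wf {T : SType A} (h : (SType.mu T).wf) : T.unfold.wf := by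
  refine wf_subst h.1 (fun n => ?_)
  cases n with
  | zero => exact h
  | succ n => trivial

theorem muh_unfold {T : SType A} (hw : (SType.mu T).wf) (hc : (SType.mu T).closed) :
    muh T.unfold = muh T := by
  refine muh_subst (spineOk_of_wf hw.1 (k := 1) hc (fun i hi => ?_)) _
  interval_cases i
  exact hw.2

/-- The key unfolding/substitution commutation. -/
theorem subst_unfold (T : SType A) (σ : ℕ → SType A) :
    (T.subst (liftS σ)).unfold = T.subst (consS ((SType.mu T).subst σ) σ) := by
  show (T.subst (liftS σ)).subst _ = _
  rw [subst_subst]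
  congr 1
  funext n
  cases n with
  | zero => rfl
  | succ n =>
      show ((σ n).rename Nat.succ).subst _ = σ n
      rw [rename_subst]
      exact subst_var_id (σ n)

end SType
end SessionCF
namespace SessionCF
namespace Formula
variable {A : Type}

theorem rename_rename (φ : Formula A) (f g : ℕ → ℕ) :
    (φ.rename f).rename g = φ.rename (g ∘ f) := by
  induction φ generalizing f g with
  | nu φ ih => simp [rename, ih, SType.liftR_comp]
  | _ => simp_all [rename]

theorem liftF_comp_liftR (τ : ℕ → Formula A) (f : ℕ → ℕ) :
    (fun n => liftF τ (SType.liftR f n)) = liftF (fun n => τ (f n)) := by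
  funext n; cases n <;> rfl

theorem rename_subst (φ : Formula A) (f : ℕ → ℕ) (τ : ℕ → Formula A) :
    (φ.rename f).subst τ = φ.subst (fun n => τ (f n)) := by
  induction φ generalizing f τ with
  | nu φ ih => simp [rename, subst, ih, liftF_comp_liftR]
  | _ => simp_all [rename, subst]

theorem liftF_rename (τ : ℕ → Formula A) (f : ℕ → ℕ) :
    (fun n => (liftF τ n).rename (SType.liftR f)) = liftF (fun n => (τ n).rename f) := by
  funext n; cases n with
  | zero => rfl
  | succ n => simp only [liftF, rename_rename]; rfl

theorem subst_rename (φ : Formula A) (τ : ℕ → Formula A) (f : ℕ → ℕ) :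
    (φ.subst τ).rename f = φ.subst (fun n => (τ n).rename f) := by
  induction φ generalizing τ f with
  | nu φ ih => simp [rename, subst, ih, liftF_rename]
  | _ => simp_all [rename, subst]

theorem liftF_subst (τ τ' : ℕ → Formula A) :
    (fun n => (liftF τ n).subst (liftF τ')) = liftF (fun n => (τ n).subst τ') := by
  funext n; cases n with
  | zero => rfl
  | succ n => simp only [liftF, rename_subst, subst_rename]

theorem subst_subst (φ : Formula A) (τ τ' : ℕ → Formula A) :
    (φ.subst τ).subst τ' = φ.subst (fun n => (τ n).subst τ') := by
  induction φ generalizing τ τ' with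
  | nu φ ih => simp [subst, ih, liftF_subst]
  | _ => simp_all [subst]

theorem liftF_var : liftF (A := A) .var = .var := by
  funext n; cases n <;> rfl

theorem subst_var_id (φ : Formula A) : φ.subst .var = φ := by
  induction φ with
  | nu φ ih => simp [subst, liftF_var, ih]
  | _ => simp_all [subst]

theorem inst_subst (φ χ : Formula A) (τ : ℕ → Formula A) :
    (φ.inst χ).subst τ = φ.subst (consF (χ.subst τ) τ) := by
  show (φ.subst _).subst τ = _
  rw [subst_subst]
  congr 1
  funext n
  cases n <;> rfl

theorem subst_inst (φ : Formula A) (τ : ℕ → Formula A) (χ : Formula A) :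
    (φ.subst (liftF τ)).inst χ = φ.subst (consF χ τ) := by
  show (φ.subst _).subst _ = _
  rw [subst_subst]
  congr 1
  funext n
  cases n with
  | zero => rfl
  | succ n =>
      show ((τ n).rename Nat.succ).subst _ = τ n
      rw [rename_subst]
      exact subst_var_id (τ n)

theorem nuApprox_subst (φ : Formula A) (τ : ℕ → Formula A) (n : ℕ) :
    (φ.nuApprox n).subst τ = (φ.subst (liftF τ)).nuApprox n := by
  induction n with
  | zero => rfl
  | succ n ih =>
      show (φ.inst (φ.nuApprox n)).subst τ = (φ.subst (liftF τ)).inst ((φ.subst (liftF τ)).nuApprox n)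
      rw [inst_subst, subst_inst, ih]

end Formula
end SessionCF
namespace SessionCF
variable {A : Type}

theorem step_det {T : SType A} {α : Act A} {T₁ T₂ : SType A}
    (h1 : Step T α T₁) (h2 : Step T α T₂) : T₁ = T₂ := by
  induction h1 with
  | choice h =>
      cases h2 with
      | choice _ => rfl
  | unf h ih =>
      cases h2 with
      | unf h' => exact ih h'

theorem no_step_end {α : Act A} {T' : SType A} (h : Step (SType.end_ : SType A) α T') : False := by
  cases h

theorem no_step_var {n : ℕ} {α : Act A} {T' : SType A} (h : Step (SType.var n : SType A) α T') : False := by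
  cases h

theorem step_mu_iff {T : SType A} {α : Act A} {T' : SType A} :
    Step (SType.mu T) α T' ↔ Step T.unfold α T' := by
  constructor
  · intro h; cases h with | unf h => exact h
  · exact Step.unf

theorem step_choice_inv {p : Pol} {d : Finset A} {br : A → SType A} {α : Act A} {T' : SType A}
    (h : Step (SType.choice p d br) α T') :
    ∃ a, α = (p, a) ∧ a ∈ d ∧ T' = br a := by
  cases h with
  | choice ha => exact ⟨_, rfl, ha, rfl⟩

theorem not_sat_ff {T : SType A} (h : Sat T Formula.ff) : False := by cases h

theorem sat_and_inv {T : SType A} {φ ψ : Formula A} (h : Sat T (.and φ ψ)) :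
    Sat T φ ∧ Sat T ψ := by cases h with | and h1 h2 => exact ⟨h1, h2⟩

theorem sat_or_inv {T : SType A} {φ ψ : Formula A} (h : Sat T (.or φ ψ)) :
    Sat T φ ∨ Sat T ψ := by
  cases h with
  | orl h => exact Or.inl h
  | orr h => exact Or.inr h

theorem sat_box_inv {T : SType A} {α : Act A} {φ : Formula A} (h : Sat T (.box α φ)) :
    ∀ T', Step T α T' → Sat T' φ := by cases h with | box h => exact h

theorem sat_dia_inv {T : SType A} {α : Act A} {φ : Formula A} (h : Sat T (.dia α φ)) :
    ∃ T', Step T α T' ∧ Sat T' φ := by cases h with | dia hs hφ => exact ⟨_, hs, hφ⟩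

theorem sat_nu_inv {T : SType A} {φ : Formula A} (h : Sat T (.nu φ)) :
    ∀ n, Sat T (φ.nuApprox n) := by cases h with | nu h => exact h

theorem sat_unfold {T : SType A} {φ : Formula A} :
    Sat (SType.mu T) φ ↔ Sat T.unfold φ := by
  constructor
  · intro h
    generalize hX : SType.mu T = X at h
    induction h generalizing T with
    | tt => exact Sat.tt
    | and _ _ ih1 ih2 => exact Sat.and (ih1 hX) (ih2 hX)
    | orl _ ih => exact Sat.orl (ih hX)
    | orr _ ih => exact Sat.orr (ih hX)
    | box h => subst hX; exact Sat.box (fun T' hs => h T' (Step.unf hs))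
    | dia hs hφ => subst hX; exact Sat.dia (step_mu_iff.mp hs) hφ
    | nu _ ih => exact Sat.nu (fun n => ih n hX)
  · intro h
    generalize hX : SType.unfold T = X at h
    induction h generalizing T with
    | tt => exact Sat.tt
    | and _ _ ih1 ih2 => exact Sat.and (ih1 hX) (ih2 hX)
    | orl _ ih => exact Sat.orl (ih hX)
    | orr _ ih => exact Sat.orr (ih hX)
    | box h => subst hX; exact Sat.box (fun T' hs => h T' (step_mu_iff.mp hs))
    | dia hs hφ => subst hX; exact Sat.dia (Step.unf hs) hφ
    | nu _ ih => exact Sat.nu (fun n => ih n hX)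

end SessionCF
namespace SessionCF
variable {A : Type}

theorem sat_bigAnd {T : SType A} {l : List (Formula A)} :
    Sat T (bigAnd l) ↔ ∀ φ ∈ l, Sat T φ := by
  induction l with
  | nil => simp [bigAnd]; exact Sat.tt
  | cons φ rest ih =>
      simp only [bigAnd, List.mem_cons]
      constructor
      · intro h
        obtain ⟨h1, h2⟩ := sat_and_inv h
        rintro ψ (rfl | hm)
        · exact h1
        · exact ih.mp h2 ψ hm
      · intro h
        exact Sat.and (h φ (Or.inl rfl)) (ih.mpr (fun ψ hm => h ψ (Or.inr hm)))

theorem sat_bigOr {T : SType A} {l : List (Formula A)} :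
    Sat T (bigOr l) ↔ ∃ φ ∈ l, Sat T φ := by
  induction l with
  | nil =>
      simp [bigOr]
      intro h; exact not_sat_ff h
  | cons φ rest ih =>
      simp only [bigOr, List.mem_cons]
      constructor
      · intro h
        rcases sat_or_inv h with h | h
        · exact ⟨φ, Or.inl rfl, h⟩
        · obtain ⟨ψ, hm, hψ⟩ := ih.mp h
          exact ⟨ψ, Or.inr hm, hψ⟩
      · rintro ⟨ψ, (rfl | hm), hψ⟩
        · exact Sat.orl hψ
        · exact Sat.orr (ih.mpr ⟨ψ, hm, hψ⟩)

theorem bigAnd_subst (l : List (Formula A)) (τ : ℕ → Formula A) :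
    (bigAnd l).subst τ = bigAnd (l.map (fun φ => φ.subst τ)) := by
  induction l with
  | nil => rfl
  | cons φ rest ih => simp [bigAnd, Formula.subst, ih]

theorem bigOr_subst (l : List (Formula A)) (τ : ℕ → Formula A) :
    (bigOr l).subst τ = bigOr (l.map (fun φ => φ.subst τ)) := by
  induction l with
  | nil => rfl
  | cons φ rest ih => simp [bigOr, Formula.subst, ih]

theorem bigAnd_rename (l : List (Formula A)) (f : ℕ → ℕ) :
    (bigAnd l).rename f = bigAnd (l.map (fun φ => φ.rename f)) := by
  induction l with
  | nil => rfl
  | cons φ rest ih => simp [bigAnd, Formula.rename, ih]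

theorem bigOr_rename (l : List (Formula A)) (f : ℕ → ℕ) :
    (bigOr l).rename f = bigOr (l.map (fun φ => φ.rename f)) := by
  induction l with
  | nil => rfl
  | cons φ rest ih => simp [bigOr, Formula.rename, ih]

theorem mem_allActs [Fintype A] [LinearOrder A] (α : Act A) : α ∈ allActs A := by
  obtain ⟨p, a⟩ := α
  cases p <;> simp [allActs, Finset.mem_sort]

/-- Entailment between formulae. -/
def Ent (φ ψ : Formula A) : Prop := ∀ T : SType A, Sat T φ → Sat T ψ

theorem ent_refl (φ : Formula A) : Ent φ φ := fun _ h => h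

theorem mono_subst (φ : Formula A) :
    ∀ (τ τ' : ℕ → Formula A), (∀ n, Ent (τ n) (τ' n)) →
      Ent (φ.subst τ) (φ.subst τ') := by
  induction φ with
  | tt => intro τ τ' h T hs; exact Sat.tt
  | ff => intro τ τ' h T hs; exact absurd hs not_sat_ff
  | and φ ψ ihφ ihψ =>
      intro τ τ' h T hs
      obtain ⟨h1, h2⟩ := sat_and_inv hs
      exact Sat.and (ihφ τ τ' h T h1) (ihψ τ τ' h T h2)
  | or φ ψ ihφ ihψ =>
      intro τ τ' h T hs
      rcases sat_or_inv hs with h1 | h1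
      · exact Sat.orl (ihφ τ τ' h T h1)
      · exact Sat.orr (ihψ τ τ' h T h1)
  | box α φ ih =>
      intro τ τ' h T hs
      exact Sat.box (fun T' hst => ih τ τ' h T' (sat_box_inv hs T' hst))
  | dia α φ ih =>
      intro τ τ' h T hs
      obtain ⟨T', hst, hφ⟩ := sat_dia_inv hs
      exact Sat.dia hst (ih τ τ' h T' hφ)
  | nu φ ih =>
      intro τ τ' h T hs
      have hs' := sat_nu_inv hs
      refine Sat.nu (fun n => ?_)
      rw [← Formula.nuApprox_subst]
      have key : ∀ n, Ent ((φ.nuApprox n).subst τ) ((φ.nuApprox n).subst τ') := by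
        intro n
        induction n with
        | zero => intro T _; exact Sat.tt
        | succ n ihn =>
            show Ent ((φ.inst (φ.nuApprox n)).subst τ) ((φ.inst (φ.nuApprox n)).subst τ')
            rw [Formula.inst_subst, Formula.inst_subst]
            refine ih _ _ (fun m => ?_)
            cases m with
            | zero => exact ihn
            | succ m => exact h m
      refine key n T ?_
      rw [Formula.nuApprox_subst]
      exact hs' n
  | var n => intro τ τ' h T hs; exact h n T hs

theorem ent_nuApprox_succ (φ : Formula A) (n : ℕ) :
    Ent (φ.nuApprox (n + 1)) (φ.nuApprox n) := by
  induction n with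
  | zero => intro T _; exact Sat.tt
  | succ n ih =>
      show Ent (φ.subst _) (φ.subst _)
      refine mono_subst φ _ _ (fun m => ?_)
      cases m with
      | zero => exact ih
      | succ m => exact ent_refl _

theorem ent_nuApprox_le (φ : Formula A) {n m : ℕ} (h : n ≤ m) :
    Ent (φ.nuApprox m) (φ.nuApprox n) := by
  induction m with
  | zero => cases Nat.le_zero.mp h; exact ent_refl _
  | succ m ih =>
      rcases Nat.lt_or_ge n (m+1) with hlt | hge
      · exact fun T hs => ih (Nat.lt_succ_iff.mp hlt) T (ent_nuApprox_succ φ m T hs)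
      · have : n = m + 1 := Nat.le_antisymm h hge
        subst this; exact ent_refl _

theorem ent_nu_nuApprox (φ : Formula A) (n : ℕ) : Ent (.nu φ) (φ.nuApprox n) :=
  fun _ h => sat_nu_inv h n

theorem continuity (φ : Formula A) :
    ∀ (τs : ℕ → ℕ → Formula A) (τ : ℕ → Formula A),
      (∀ j n, Ent (τ j) (τs n j)) →
      (∀ j n m, n ≤ m → Ent (τs m j) (τs n j)) →
      (∀ j (T : SType A), (∀ n, Sat T (τs n j)) → Sat T (τ j)) →
      ∀ T : SType A, (∀ n, Sat T (φ.subst (τs n))) → Sat T (φ.subst τ) := by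
  induction φ with
  | tt => intro τs τ h1 h2 h3 T h; exact Sat.tt
  | ff => intro τs τ h1 h2 h3 T h; exact absurd (h 0) not_sat_ff
  | and φ ψ ihφ ihψ =>
      intro τs τ h1 h2 h3 T h
      exact Sat.and (ihφ τs τ h1 h2 h3 T (fun n => (sat_and_inv (h n)).1))
        (ihψ τs τ h1 h2 h3 T (fun n => (sat_and_inv (h n)).2))
  | or φ ψ ihφ ihψ =>
      intro τs τ h1 h2 h3 T h
      by_cases hall : ∀ n, Sat T (φ.subst (τs n))
      · exact Sat.orl (ihφ τs τ h1 h2 h3 T hall)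
      · push_neg at hall
        obtain ⟨N, hN⟩ := hall
        refine Sat.orr (ihψ τs τ h1 h2 h3 T (fun n => ?_))
        rcases sat_or_inv (h (max n N)) with hl | hr
        · exact absurd (mono_subst φ _ _ (fun j => h2 j N (max n N) (le_max_right n N)) T hl) hN
        · exact mono_subst ψ _ _ (fun j => h2 j n (max n N) (le_max_left n N)) T hr
  | box α φ ih =>
      intro τs τ h1 h2 h3 T h
      refine Sat.box (fun T' hst => ?_)
      exact ih τs τ h1 h2 h3 T' (fun n => sat_box_inv (h n) T' hst)
  | dia α φ ih =>
      intro τs τ h1 h2 h3 T h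
      obtain ⟨T', hst, _⟩ := sat_dia_inv (h 0)
      refine Sat.dia hst (ih τs τ h1 h2 h3 T' (fun n => ?_))
      obtain ⟨T'', hst', hφ'⟩ := sat_dia_inv (h n)
      rwa [step_det hst hst']
  | nu φ ih =>
      intro τs τ h1 h2 h3 T h
      refine Sat.nu (fun m => ?_)
      rw [← Formula.nuApprox_subst]
      have key : ∀ m (T : SType A),
          (∀ n, Sat T ((φ.nuApprox m).subst (τs n))) → Sat T ((φ.nuApprox m).subst τ) := by
        intro m
        induction m with
        | zero => intro T _; exact Sat.tt
        | succ m ihm =>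
            intro T hT
            show Sat T ((φ.inst (φ.nuApprox m)).subst τ)
            rw [Formula.inst_subst]
            refine ih (fun n => Formula.consF ((φ.nuApprox m).subst (τs n)) (τs n))
              (Formula.consF ((φ.nuApprox m).subst τ) τ) ?_ ?_ ?_ T ?_
            · intro j n
              cases j with
              | zero => exact mono_subst _ _ _ (fun j' => h1 j' n)
              | succ j => exact h1 j n
            · intro j n m' hnm
              cases j with
              | zero => exact mono_subst _ _ _ (fun j' => h2 j' n m' hnm)
              | succ j => exact h2 j n m' hnm
            · intro j T'
              cases j with
              | zero => exact ihm T'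
              | succ j => exact h3 j T'
            · intro n
              have := hT n
              rw [show (φ.nuApprox (m+1)) = φ.inst (φ.nuApprox m) from rfl,
                Formula.inst_subst] at this
              exact this
      refine key m T (fun n => ?_)
      rw [Formula.nuApprox_subst]
      exact sat_nu_inv (h n) m
  | var j => intro τs τ h1 h2 h3 T h; exact h3 j T h

theorem sat_nu_unfold {T : SType A} {φ : Formula A} (h : Sat T (.nu φ)) :
    Sat T (φ.inst (.nu φ)) := by
  have := continuity φ (fun n => Formula.consF (φ.nuApprox n) .var)
    (Formula.consF (.nu φ) .var) ?_ ?_ ?_ T ?_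
  · exact this
  · intro j n
    cases j with
    | zero => exact ent_nu_nuApprox φ n
    | succ j => exact ent_refl _
  · intro j n m hnm
    cases j with
    | zero => exact ent_nuApprox_le φ hnm
    | succ j => exact ent_refl _
  · intro j T'
    cases j with
    | zero => exact fun h' => Sat.nu h'
    | succ j => exact fun h' => h' 0
  · intro n
    have := sat_nu_inv h (n + 1)
    rw [show (φ.nuApprox (n+1)) = φ.inst (φ.nuApprox n) from rfl] at this
    exact this

theorem sat_nu_fold {T : SType A} {φ : Formula A} (h : Sat T (φ.inst (.nu φ))) :
    Sat T (.nu φ) := by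
  refine Sat.nu (fun n => ?_)
  cases n with
  | zero => exact Sat.tt
  | succ n =>
      show Sat T (φ.inst (φ.nuApprox n))
      exact mono_subst φ _ _ (fun m => by
        cases m with
        | zero => exact ent_nu_nuApprox φ n
        | succ m => exact ent_refl _) T h

end SessionCF
namespace SessionCF
variable {A : Type} [Fintype A] [LinearOrder A]

theorem bigAnd_map_congr {β : Type*} {l : List β} {f g : β → Formula A}
    (h : ∀ a ∈ l, f a = g a) : bigAnd (l.map f) = bigAnd (l.map g) := by
  rw [List.map_congr_left h]

theorem bigOr_map_congr {β : Type*} {l : List β} {f g : β → Formula A}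
    (h : ∀ a ∈ l, f a = g a) : bigOr (l.map f) = bigOr (l.map g) := by
  rw [List.map_congr_left h]

theorem charF_rename (T : SType A) (s : Pol) (f : ℕ → ℕ) :
    (charF T s).rename f = charF (T.rename f) s := by
  induction T generalizing f with
  | end_ =>
      simp only [charF, SType.rename, bigAnd_rename, List.map_map]
      exact bigAnd_map_congr (fun a _ => rfl)
  | choice p d br ih =>
      by_cases hp : p = s
      · simp only [charF, SType.rename, hp, reduceIte, bigAnd_rename, List.map_map]
        exact bigAnd_map_congr (fun a _ => by simp [Function.comp, Formula.rename, ih])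
      · simp only [charF, SType.rename, if_neg hp, bigAnd_rename, bigOr_rename,
          List.map_map, Formula.rename]
        refine congrArg₂ _ ?_ (congrArg₂ _ ?_ ?_)
        · exact bigAnd_map_congr (fun a _ => by simp [Function.comp, Formula.rename, ih])
        · exact bigOr_map_congr (fun a _ => rfl)
        · exact bigAnd_map_congr (fun a _ => rfl)
  | mu T ih => simp [charF, SType.rename, Formula.rename, ih]
  | var n => rfl

theorem charF_subst (T : SType A) (s : Pol) (σ : ℕ → SType A) :
    (charF T s).subst (fun n => charF (σ n) s) = charF (T.subst σ) s := by
  induction T generalizing σ with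
  | end_ =>
      simp only [charF, SType.subst, bigAnd_subst, List.map_map]
      exact bigAnd_map_congr (fun a _ => rfl)
  | choice p d br ih =>
      by_cases hp : p = s
      · simp only [charF, SType.subst, hp, reduceIte, bigAnd_subst, List.map_map]
        exact bigAnd_map_congr (fun a _ => by simp [Function.comp, Formula.subst, ih])
      · simp only [charF, SType.subst, if_neg hp, bigAnd_subst, bigOr_subst,
          List.map_map, Formula.subst]
        refine congrArg₂ _ ?_ (congrArg₂ _ ?_ ?_)
        · exact bigAnd_map_congr (fun a _ => by simp [Function.comp, Formula.subst, ih])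
        · exact bigOr_map_congr (fun a _ => rfl)
        · exact bigAnd_map_congr (fun a _ => rfl)
  | mu T ih =>
      show Formula.nu ((charF T s).subst (Formula.liftF fun n => charF (σ n) s)) = _
      have : (Formula.liftF fun n => charF (σ n) s)
          = fun n => charF (SType.liftS σ n) s := by
        funext n
        cases n with
        | zero => rfl
        | succ n =>
            show (charF (σ n) s).rename Nat.succ = _
            rw [charF_rename]; rfl
      rw [this, ih]
      rfl
  | var n => rfl

theorem charF_unfold (T : SType A) (s : Pol) :
    charF T.unfold s = (charF T s).inst (.nu (charF T s)) := by
  show charF (T.subst _) s = _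
  rw [← charF_subst]
  show _ = (charF T s).subst _
  congr 1
  funext n
  cases n <;> rfl

end SessionCF
namespace SessionCF
variable {A : Type}

theorem subk_mono {s : Pol} {k : ℕ} {T U : SType A} (h : SubK s k T U) :
    ∀ j ≤ k, SubK s j T U := by
  induction h with
  | zero => intro j hj; cases Nat.le_zero.mp hj; exact SubK.zero
  | end_ =>
      intro j hj
      cases j with
      | zero => exact SubK.zero
      | succ j => exact SubK.end_
  | ch hsub hbr ih =>
      intro j hj
      cases j with
      | zero => exact SubK.zero
      | succ j => exact SubK.ch hsub (fun a ha => ih a ha j (Nat.le_of_succ_le_succ hj))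
  | coch hsub hbr ih =>
      intro j hj
      cases j with
      | zero => exact SubK.zero
      | succ j => exact SubK.coch hsub (fun a ha => ih a ha j (Nat.le_of_succ_le_succ hj))
  | recL h ih =>
      intro j hj
      cases j with
      | zero => exact SubK.zero
      | succ j => exact SubK.recL (ih (j+1) hj)
  | recR h ih =>
      intro j hj
      cases j with
      | zero => exact SubK.zero
      | succ j => exact SubK.recR (ih (j+1) hj)

theorem subk_flip {s : Pol} {k : ℕ} {T U : SType A} (h : SubK s k T U) :
    SubK s.dual k U T := by
  induction h with
  | zero => exact SubK.zero
  | end_ => exact SubK.end_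
  | ch hsub hbr ih =>
      have h2 := SubK.coch (s := s.dual) (dT := _) (brT := _) (dU := _) (brU := _) hsub ih
      rwa [Pol.dual_dual] at h2
  | coch hsub hbr ih => exact SubK.ch hsub ih
  | recL h ih => exact SubK.recR ih
  | recR h ih => exact SubK.recL ih

theorem subk_muL_inv {s : Pol} {k : ℕ} {T : SType A} {U : SType A}
    (h : SubK s k (SType.mu T) U) : SubK s k T.unfold U := by
  generalize hX : SType.mu T = X at h
  induction h generalizing T with
  | zero => exact SubK.zero
  | end_ => cases hX
  | ch _ _ _ => cases hX
  | coch _ _ _ => cases hX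
  | recL h ih =>
      cases hX
      exact h
  | recR h ih => exact SubK.recR (ih hX)

theorem subk_muR_inv {s : Pol} {k : ℕ} {T : SType A} {U : SType A}
    (h : SubK s k T (SType.mu U)) : SubK s k T U.unfold := by
  generalize hX : SType.mu U = X at h
  induction h generalizing U with
  | zero => exact SubK.zero
  | end_ => cases hX
  | ch _ _ _ => cases hX
  | coch _ _ _ => cases hX
  | recR h ih =>
      cases hX
      exact h
  | recL h ih => exact SubK.recL (ih hX)

theorem subk_choice_inv {s : Pol} {k : ℕ} {p q : Pol} {dT dU : Finset A}
    {brT brU : A → SType A}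
    (h : SubK s (k+1) (SType.choice p dT brT) (SType.choice q dU brU)) :
    (p = s ∧ q = s ∧ dT ⊆ dU ∧ ∀ a ∈ dT, SubK s k (brT a) (brU a)) ∨
    (p = s.dual ∧ q = s.dual ∧ dU ⊆ dT ∧ ∀ a ∈ dU, SubK s k (brT a) (brU a)) := by
  cases h with
  | ch hsub hbr => exact Or.inl ⟨rfl, rfl, hsub, hbr⟩
  | coch hsub hbr => exact Or.inr ⟨rfl, rfl, hsub, hbr⟩

theorem subk_ch_inv {s : Pol} {k : ℕ} {dT dU : Finset A} {brT brU : A → SType A} {q : Pol}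
    (h : SubK s (k+1) (SType.choice s dT brT) (SType.choice q dU brU)) :
    q = s ∧ dT ⊆ dU ∧ ∀ a ∈ dT, SubK s k (brT a) (brU a) := by
  rcases subk_choice_inv h with ⟨_, h2, h3, h4⟩ | ⟨h1, _, _, _⟩
  · exact ⟨h2, h3, h4⟩
  · exact absurd h1.symm (Pol.dual_ne s)

theorem subk_coch_inv {s : Pol} {k : ℕ} {dT dU : Finset A} {brT brU : A → SType A} {q : Pol}
    (h : SubK s (k+1) (SType.choice s.dual dT brT) (SType.choice q dU brU)) :
    q = s.dual ∧ dU ⊆ dT ∧ ∀ a ∈ dU, SubK s k (brT a) (brU a) := by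
  rcases subk_choice_inv h with ⟨h1, _, _, _⟩ | ⟨_, h2, h3, h4⟩
  · exact absurd h1 (Pol.dual_ne s)
  · exact ⟨h2, h3, h4⟩

end SessionCF
namespace SessionCF
variable {A : Type} [Fintype A] [LinearOrder A]

theorem not_closed_var {n : ℕ} (h : (SType.var n : SType A).closed) : False := by
  simp [SType.closed, SType.closedUnder] at h

theorem no_step_of_subk_end {s : Pol} :
    ∀ (N : ℕ) (U : SType A), SType.muh U = N → U.wf → U.closed →
      (∀ k, SubK s k .end_ U) → ∀ (α : Act A) (U' : SType A), Step U α U' → False := by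
  intro N
  induction N using Nat.strong_induction_on with
  | _ N ihN =>
    intro U hN hUw hUc hsub α U' hstep
    cases U with
    | end_ => exact no_step_end hstep
    | var n => exact not_closed_var hUc
    | choice q dU brU => cases hsub 1
    | mu U₀ =>
        refine ihN (SType.muh U₀.unfold) ?_ U₀.unfold rfl (SType.unfold_wf hUw)
          (SType.unfold_closed hUc) (fun k => subk_muR_inv (hsub k)) α U'
          (step_mu_iff.mp hstep)
        rw [SType.muh_unfold hUw hUc, ← hN]
        exact Nat.lt_succ_self _

theorem toSat (s : Pol) (T : SType A) :
    ∀ (m : ℕ) (σ : ℕ → SType A) (τ : ℕ → Formula A),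
      T.wf → T.closedUnder m →
      (∀ n, (σ n).wf) → (∀ n < m, (σ n).closed) →
      (∀ j < m, ∀ U' : SType A, U'.wf → U'.closed →
          (∀ k, SubK s k (σ j) U') → Sat U' (τ j)) →
      ∀ U : SType A, U.wf → U.closed → (∀ k, SubK s k (T.subst σ) U) →
        Sat U ((charF T s).subst τ) := by
  induction T with
  | var n =>
      intro m σ τ _ hcl _ _ henv U hUw hUc hsub
      exact henv n hcl U hUw hUc hsub
  | end_ =>
      intro m σ τ _ _ _ _ _ U hUw hUc hsub
      show Sat U ((bigAnd ((allActs A).map (fun α => Formula.box α .ff))).subst τ)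
      rw [bigAnd_subst, List.map_map]
      refine sat_bigAnd.mpr (fun φ hφ => ?_)
      obtain ⟨α, hα, rfl⟩ := List.mem_map.mp hφ
      refine Sat.box (fun U' hstep => ?_)
      exact absurd hstep (no_step_of_subk_end (SType.muh U) U rfl hUw hUc hsub α U')
  | mu T₀ ih =>
      intro m σ τ hTw hcl hσw hσc henv U hUw hUc hsub
      show Sat U (Formula.nu ((charF T₀ s).subst (Formula.liftF τ)))
      have key : ∀ n, ∀ U : SType A, U.wf → U.closed →
          (∀ k, SubK s k ((SType.mu T₀).subst σ) U) →
          Sat U (((charF T₀ s).nuApprox n).subst τ) := by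
        intro n
        induction n with
        | zero => intro U _ _ _; exact Sat.tt
        | succ n ihn =>
            intro U hUw hUc hsub
            show Sat U (((charF T₀ s).inst ((charF T₀ s).nuApprox n)).subst τ)
            rw [Formula.inst_subst]
            refine ih (m+1) (SType.consS ((SType.mu T₀).subst σ) σ)
              (Formula.consF (((charF T₀ s).nuApprox n).subst τ) τ)
              hTw.1 hcl (fun n' => ?_) (fun n' hn' => ?_) (fun j hj => ?_)
              U hUw hUc (fun k => ?_)
            · cases n' with
              | zero => exact SType.wf_subst hTw hσw
              | succ n' => exact hσw n'
            · cases n' with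
              | zero => exact SType.closedUnder_subst hcl hσc
              | succ n' => exact hσc n' (Nat.lt_of_succ_lt_succ hn')
            · cases j with
              | zero => exact fun U' hw hc hs => ihn U' hw hc hs
              | succ j => exact henv j (Nat.lt_of_succ_lt_succ hj)
            · have h1 := subk_muL_inv (hsub k)
              rwa [SType.subst_unfold] at h1
      refine Sat.nu (fun n => ?_)
      rw [← Formula.nuApprox_subst]
      exact key n U hUw hUc hsub
  | choice p d br ih =>
      intro m σ τ hTw hcl hσw hσc henv
      have key : ∀ (N : ℕ) (U : SType A), SType.muh U = N → U.wf → U.closed →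
          (∀ k, SubK s k ((SType.choice p d br).subst σ) U) →
          Sat U ((charF (SType.choice p d br) s).subst τ) := by
        intro N
        induction N using Nat.strong_induction_on with
        | _ N ihN =>
          intro U hN hUw hUc hsub
          cases U with
          | var n => exact absurd hUc not_closed_var
          | end_ => cases hsub 1
          | mu U₀ =>
              rw [sat_unfold]
              refine ihN (SType.muh U₀.unfold) ?_ U₀.unfold rfl (SType.unfold_wf hUw)
                (SType.unfold_closed hUc) (fun k => subk_muR_inv (hsub k))
              rw [SType.muh_unfold hUw hUc, ← hN]
              exact Nat.lt_succ_self _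
          | choice q dU brU =>
              by_cases hp : p = s
              · subst hp
                obtain ⟨rfl, hdsub, _⟩ := subk_ch_inv (hsub 1)
                simp only [charF, eq_self_iff_true, if_true]
                rw [bigAnd_subst, List.map_map]
                refine sat_bigAnd.mpr (fun φ hφ => ?_)
                obtain ⟨a, ha, rfl⟩ := List.mem_map.mp hφ
                have had : a ∈ d := (Finset.mem_sort _).mp ha
                refine Sat.dia (Step.choice (hdsub had)) ?_
                exact ih a m σ τ (hTw.2 a had) (hcl a had) hσw hσc henv
                  (brU a) (hUw.2 a (hdsub had)) (hUc a (hdsub had))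
                  (fun k => (subk_ch_inv (hsub (k+1))).2.2 a had)
              · have hpd : p = s.dual := Pol.eq_dual_of_ne hp
                subst hpd
                obtain ⟨rfl, hdsub, _⟩ := subk_coch_inv (hsub 1)
                simp only [charF, if_neg (Pol.dual_ne s)]
                refine Sat.and ?_ (Sat.and ?_ ?_)
                · rw [bigAnd_subst, List.map_map]
                  refine sat_bigAnd.mpr (fun φ hφ => ?_)
                  obtain ⟨a, ha, rfl⟩ := List.mem_map.mp hφ
                  have had : a ∈ d := (Finset.mem_sort _).mp ha
                  show Sat _ (Formula.box (s.dual, a) ((charF (br a) s).subst τ))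
                  refine Sat.box (fun U' hstep => ?_)
                  obtain ⟨a', heq, ha', rfl⟩ := step_choice_inv hstep
                  cases heq
                  exact ih a m σ τ (hTw.2 a had) (hcl a had) hσw hσc henv
                    (brU a) (hUw.2 a ha') (hUc a ha')
                    (fun k => (subk_coch_inv (hsub (k+1))).2.2 a ha')
                · obtain ⟨a₁, ha₁⟩ := hUw.1
                  rw [bigOr_subst, List.map_map]
                  refine sat_bigOr.mpr ⟨Formula.dia (s.dual, a₁) .tt, ?_,
                    Sat.dia (Step.choice ha₁) Sat.tt⟩
                  exact List.mem_map.mpr ⟨a₁, (Finset.mem_sort _).mpr (hdsub ha₁), rfl⟩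
                · rw [bigAnd_subst, List.map_map]
                  refine sat_bigAnd.mpr (fun φ hφ => ?_)
                  obtain ⟨α, hα, rfl⟩ := List.mem_map.mp hφ
                  show Sat _ (Formula.box α .ff)
                  refine Sat.box (fun U' hstep => ?_)
                  exfalso
                  obtain ⟨a, rfl, ha, rfl⟩ := step_choice_inv hstep
                  have hf := List.of_mem_filter hα
                  simp at hf
                  exact hf (hdsub ha)
      intro U hUw hUc hsub
      exact key (SType.muh U) U rfl hUw hUc hsub

end SessionCF
namespace SessionCF
variable {A : Type} [Fintype A] [LinearOrder A]

theorem toSubK (s : Pol) : ∀ (k : ℕ) (T U : SType A), T.wf → T.closed →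
    U.wf → U.closed → Sat U (charF T s) → SubK s k T U := by
  intro k
  induction k with
  | zero => intro T U _ _ _ _ _; exact SubK.zero
  | succ k IHk =>
    have key : ∀ (N : ℕ) (T U : SType A), SType.muh T + SType.muh U = N →
        T.wf → T.closed → U.wf → U.closed → Sat U (charF T s) → SubK s (k+1) T U := by
      intro N
      induction N using Nat.strong_induction_on with
      | _ N ihN =>
        intro T U hN hTw hTc hUw hUc hsat
        cases T with
        | var n => exact absurd hTc not_closed_var
        | mu T₀ =>
            refine SubK.recL (ihN (SType.muh T₀.unfold + SType.muh U) ?_ _ U rfl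
              (SType.unfold_wf hTw) (SType.unfold_closed hTc) hUw hUc ?_)
            · rw [SType.muh_unfold hTw hTc, ← hN]
              exact Nat.add_lt_add_right (Nat.lt_succ_self _) _
            · have h1 := sat_nu_unfold hsat
              rwa [← charF_unfold] at h1
        | end_ =>
            cases U with
            | var n => exact absurd hUc not_closed_var
            | mu U₀ =>
                refine SubK.recR (ihN (SType.muh (SType.end_ : SType A) + SType.muh U₀.unfold) ?_
                  _ _ rfl hTw hTc (SType.unfold_wf hUw) (SType.unfold_closed hUc)
                  (sat_unfold.mp hsat))
                rw [SType.muh_unfold hUw hUc, ← hN]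
                exact Nat.add_lt_add_left (Nat.lt_succ_self _) _
            | end_ => exact SubK.end_
            | choice q dU brU =>
                exfalso
                obtain ⟨a, ha⟩ := hUw.1
                have hmem : Formula.box ((q, a) : Act A) Formula.ff ∈
                    (allActs A).map (fun α => Formula.box α Formula.ff) :=
                  List.mem_map.mpr ⟨(q, a), mem_allActs _, rfl⟩
                have := sat_box_inv (sat_bigAnd.mp hsat _ hmem) (brU a) (Step.choice ha)
                exact not_sat_ff this
        | choice p d br =>
            cases U with
            | var n => exact absurd hUc not_closed_var
            | mu U₀ =>
                refine SubK.recR (ihN (SType.muh (SType.choice p d br) + SType.muh U₀.unfold) ?_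
                  _ _ rfl hTw hTc (SType.unfold_wf hUw) (SType.unfold_closed hUc)
                  (sat_unfold.mp hsat))
                rw [SType.muh_unfold hUw hUc, ← hN]
                exact Nat.add_lt_add_left (Nat.lt_succ_self _) _
            | end_ =>
                exfalso
                obtain ⟨a₀, ha₀⟩ := hTw.1
                by_cases hp : p = s
                · subst hp
                  simp only [charF, eq_self_iff_true, if_true] at hsat
                  have hmem : Formula.dia ((p, a₀) : Act A) (charF (br a₀) p) ∈
                      ((d.sort (· ≤ ·)).map (fun a => Formula.dia (p, a) (charF (br a) p))) :=
                    List.mem_map.mpr ⟨a₀, (Finset.mem_sort _).mpr ha₀, rfl⟩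
                  obtain ⟨U', hstep, _⟩ := sat_dia_inv (sat_bigAnd.mp hsat _ hmem)
                  exact no_step_end hstep
                · have hpd : p = s.dual := Pol.eq_dual_of_ne hp
                  subst hpd
                  simp only [charF, if_neg (Pol.dual_ne s)] at hsat
                  obtain ⟨_, h2⟩ := sat_and_inv hsat
                  obtain ⟨h2, _⟩ := sat_and_inv h2
                  obtain ⟨φ, hmem, hφ⟩ := sat_bigOr.mp h2
                  obtain ⟨a, _, rfl⟩ := List.mem_map.mp hmem
                  obtain ⟨U', hstep, _⟩ := sat_dia_inv hφ
                  exact no_step_end hstep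
            | choice q dU brU =>
                by_cases hp : p = s
                · subst hp
                  simp only [charF, eq_self_iff_true, if_true] at hsat
                  have hdia : ∀ a ∈ d, ∃ U', Step (SType.choice q dU brU) (p, a) U' ∧
                      Sat U' (charF (br a) p) := by
                    intro a ha
                    exact sat_dia_inv (sat_bigAnd.mp hsat _
                      (List.mem_map.mpr ⟨a, (Finset.mem_sort _).mpr ha, rfl⟩))
                  obtain ⟨a₀, ha₀⟩ := hTw.1
                  obtain ⟨U', hstep₀, _⟩ := hdia a₀ ha₀
                  obtain ⟨a', heq, _, _⟩ := step_choice_inv hstep₀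
                  have hq : q = p := (Prod.mk.injEq _ _ _ _).mp heq.symm |>.1
                  subst hq
                  refine SubK.ch (fun a ha => ?_) (fun a ha => ?_)
                  · obtain ⟨U', hstep, _⟩ := hdia a ha
                    obtain ⟨a', heq, ha', rfl⟩ := step_choice_inv hstep
                    cases heq
                    exact ha'
                  · obtain ⟨U', hstep, hsat'⟩ := hdia a ha
                    obtain ⟨a', heq, ha', rfl⟩ := step_choice_inv hstep
                    cases heq
                    exact IHk (br a) (brU a) (hTw.2 a ha) (hTc a ha)
                      (hUw.2 a ha') (hUc a ha') hsat'
                · have hpd : p = s.dual := Pol.eq_dual_of_ne hp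
                  subst hpd
                  simp only [charF, if_neg (Pol.dual_ne s)] at hsat
                  obtain ⟨h1, h23⟩ := sat_and_inv hsat
                  obtain ⟨h2, h3⟩ := sat_and_inv h23
                  obtain ⟨φ, hmem, hφ⟩ := sat_bigOr.mp h2
                  obtain ⟨a₁, _, rfl⟩ := List.mem_map.mp hmem
                  obtain ⟨U', hstep₁, _⟩ := sat_dia_inv hφ
                  obtain ⟨a', heq, _, _⟩ := step_choice_inv hstep₁
                  have hq : q = s.dual := (Prod.mk.injEq _ _ _ _).mp heq.symm |>.1
                  subst hq
                  have hsub : dU ⊆ d := by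
                    intro a ha
                    by_contra had
                    have hmemf : Formula.box ((Pol.dual s, a) : Act A) Formula.ff ∈
                        (((allActs A).filter
                          (fun α => ¬ (α.1 = Pol.dual s ∧ α.2 ∈ d))).map
                            (fun α => Formula.box α Formula.ff)) := by
                      refine List.mem_map.mpr ⟨(Pol.dual s, a), ?_, rfl⟩
                      refine List.mem_filter.mpr ⟨mem_allActs _, by simp [had]⟩
                    have := sat_box_inv (sat_bigAnd.mp h3 _ hmemf) (brU a) (Step.choice ha)
                    exact not_sat_ff this
                  refine SubK.coch hsub (fun a ha => ?_)
                  have hmem1 : Formula.box ((Pol.dual s, a) : Act A) (charF (br a) s) ∈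
                      ((d.sort (· ≤ ·)).map (fun a => Formula.box (Pol.dual s, a) (charF (br a) s))) :=
                    List.mem_map.mpr ⟨a, (Finset.mem_sort _).mpr (hsub ha), rfl⟩
                  have hsat' := sat_box_inv (sat_bigAnd.mp h1 _ hmem1) (brU a) (Step.choice ha)
                  exact IHk (br a) (brU a) (hTw.2 a (hsub ha)) (hTc a (hsub ha))
                    (hUw.2 a ha) (hUc a ha) hsat'
    intro T U hTw hTc hUw hUc hsat
    exact key (SType.muh T + SType.muh U) T U rfl hTw hTc hUw hUc hsat

end SessionCF
namespace SessionCF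
variable {A : Type} [Fintype A] [LinearOrder A]

theorem sat_charF_iff_subk (T U : SType A) (s : Pol)
    (hTwf : T.wf) (hTcl : T.closed) (hUwf : U.wf) (hUcl : U.closed) :
    Sat U (charF T s) ↔ ∀ k, SubK s k T U := by
  constructor
  · intro h k
    exact toSubK s k T U hTwf hTcl hUwf hUcl h
  · intro h
    have := toSat s T 0 SType.var Formula.var hTwf hTcl (fun n => trivial)
      (fun n hn => absurd hn (Nat.not_lt_zero n))
      (fun j hj => absurd hj (Nat.not_lt_zero j)) U hUwf hUcl
      (fun k => by rw [SType.subst_var_id]; exact h k)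
    rwa [Formula.subst_var_id] at this

end SessionCF



/-- For all closed session types `T`, `U`:
`U ⊨ F(T, ⊕)` iff `T ⊨ F(U, &)`. -/
theorem sat_charF_send_iff_sat_charF_recv {A : Type} [Fintype A] [LinearOrder A]
    (T U : SessionCF.SType A)
    (hTwf : T.wf) (hTcl : T.closed) (hUwf : U.wf) (hUcl : U.closed) :
    SessionCF.Sat U (SessionCF.charF T .send) ↔
      SessionCF.Sat T (SessionCF.charF U .recv) := by
  rw [SessionCF.sat_charF_iff_subk T U .send hTwf hTcl hUwf hUcl,
    SessionCF.sat_charF_iff_subk U T .recv hUwf hUcl hTwf hTcl]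
  constructor
  · intro h k
    exact SessionCF.subk_flip (h k)
  · intro h k
    have := SessionCF.subk_flip (h k)
    rwa [show SessionCF.Pol.recv.dual = SessionCF.Pol.send from rfl] at this
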